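/- arXiv:1905.12870 — 5 statements merged into one kernel-verified Lean document; each statement's English description precedes it below -/
import Mathlib

section
/- Let f : ℝ → ℝ be convex on the interval J, let A₁,…,Aₙ be self-adjoint operators with spectra in J, let Φ₁,…,Φₙ : B(H) → B(K) be positive linear maps with ∑ᵢ Φᵢ(1_H) = 1_K, and for each i let C_{Aᵢ} = f'(Aᵢ) where f is differentiable convex. Then for every t ∈ J: ∑ᵢ Φᵢ(f(Aᵢ)) ≤ f(t)·1_K + ∑ᵢ Φᵢ(f'(Aᵢ)·Aᵢ) − t·∑ᵢ Φᵢ(f'(Aᵢ)) as operators. -/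
/-! Evaluating the tangent-line inequality `f s + f' s * (t - s) ≤ f t` at `s = Aᵢ` through the
continuous functional calculus gives `f(Aᵢ) ≤ f(t) + f'(Aᵢ) Aᵢ - t f'(Aᵢ)`; positive maps are
monotone, so applying `Φᵢ`, summing, and using `∑ Φᵢ 1 = 1` gives the claim. -/

lemma ConvexOn.add_mul_sub_le_of_hasDerivAt {f f' : ℝ → ℝ} {J : Set ℝ} (hf : ConvexOn ℝ J f)
    {s t : ℝ} (hs : s ∈ J) (ht : t ∈ J) (hderiv : HasDerivAt f (f' s) s) :
    f s + f' s * (t - s) ≤ f t := by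
  rcases lt_trichotomy s t with hst | rfl | hts
  · have := hf.le_slope_of_hasDerivAt hs ht hst hderiv
    rw [slope_def_field, le_div_iff₀ (sub_pos.2 hst)] at this
    linarith
  · simp
  · have := hf.slope_le_of_hasDerivAt ht hs hts hderiv
    rw [slope_def_field, div_le_iff₀ (sub_pos.2 hts)] at this
    linarith

lemma ConvexOn.cfc_le_tangent_line {A : Type*} [CStarAlgebra A] [PartialOrder A] [StarOrderedRing A]
    {f f' : ℝ → ℝ} {J : Set ℝ} (hf : ConvexOn ℝ J f)
    (hf' : ∀ s ∈ J, HasDerivAt f (f' s) s) (hf'c : ContinuousOn f' J)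
    {a : A} (ha : IsSelfAdjoint a) (hspec : spectrum ℝ a ⊆ J) {t : ℝ} (ht : t ∈ J) :
    cfc f a ≤ f t • 1 + (cfc f' a * a - t • cfc f' a) := by
  have hfc : ContinuousOn f (spectrum ℝ a) :=
    fun s hs => (hf' s (hspec hs)).continuousAt.continuousWithinAt
  have hf'c : ContinuousOn f' (spectrum ℝ a) := hf'c.mono hspec
  calc cfc f a ≤ cfc (fun s => f t + (f' s * s - t * f' s)) a :=
        cfc_mono fun s hs => by
          have := hf.add_mul_sub_le_of_hasDerivAt (hspec hs) ht (hf' s (hspec hs))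
          linarith
    _ = f t • 1 + (cfc f' a * a - t • cfc f' a) := by
        rw [cfc_const_add _ _ a, cfc_sub _ _ a, cfc_mul f' (fun s => s) a, cfc_id' ℝ a,
          cfc_const_mul t f' a, Algebra.algebraMap_eq_smul_one]

lemma LinearMap.monotone_of_map_isPositive {H K : Type*}
    [NormedAddCommGroup H] [InnerProductSpace ℂ H] [CompleteSpace H]
    [NormedAddCommGroup K] [InnerProductSpace ℂ K] [CompleteSpace K]
    (Φ : (H →L[ℂ] H) →ₗ[ℂ] (K →L[ℂ] K)) (hΦ : ∀ T : H →L[ℂ] H, T.IsPositive → (Φ T).IsPositive) :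
    Monotone Φ :=
  OrderHomClass.mono (PositiveLinearMap.mk₀ Φ fun T hT =>
    (Φ T).nonneg_iff_isPositive.2 (hΦ T (T.nonneg_iff_isPositive.1 hT)))

/-- Operator form of the supporting-line inequality applied at each `Aᵢ`. -/
theorem operator_supporting_line_sum {H K : Type*}
    [NormedAddCommGroup H] [InnerProductSpace ℂ H] [CompleteSpace H]
    [NormedAddCommGroup K] [InnerProductSpace ℂ K] [CompleteSpace K]
    (f f' : ℝ → ℝ) (J : Set ℝ) (hf : ConvexOn ℝ J f)
    (hf' : ∀ t ∈ J, HasDerivAt f (f' t) t) (hf'c : ContinuousOn f' J)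
    (n : ℕ) (A : Fin n → H →L[ℂ] H)
    (Φ : Fin n → (H →L[ℂ] H) →ₗ[ℂ] (K →L[ℂ] K))
    (hA : ∀ i, IsSelfAdjoint (A i)) (hspec : ∀ i, spectrum ℝ (A i) ⊆ J)
    (hΦpos : ∀ i, ∀ T : H →L[ℂ] H, T.IsPositive → (Φ i T).IsPositive)
    (hunital : ∑ i, Φ i 1 = 1) :
    ∀ t ∈ J,
      ∑ i, Φ i (cfc f (A i)) ≤
        f t • (1 : K →L[ℂ] K) + ∑ i, Φ i (cfc f' (A i) * A i)
          - t • ∑ i, Φ i (cfc f' (A i)) := by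
  intro t ht
  calc ∑ i, Φ i (cfc f (A i))
      ≤ ∑ i, Φ i (f t • 1 + (cfc f' (A i) * A i - t • cfc f' (A i))) :=
        Finset.sum_le_sum fun i _ => (Φ i).monotone_of_map_isPositive (hΦpos i) <|
          hf.cfc_le_tangent_line hf' hf'c (hA i) (hspec i) ht
    _ = f t • (1 : K →L[ℂ] K) + ∑ i, Φ i (cfc f' (A i) * A i)
          - t • ∑ i, Φ i (cfc f' (A i)) := by
        simp only [map_add, map_sub, LinearMap.map_smul_of_tower, Finset.sum_add_distrib,
          Finset.sum_sub_distrib, ← Finset.smul_sum, hunital, add_sub_assoc]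
end

section
/- Let f : ℝ → ℝ be a convex differentiable function on an interval J, let A₁,…,Aₙ be self-adjoint operators with spectra in J, and Φ₁,…,Φₙ : B(H) → B(K) positive linear maps with ∑ᵢ Φᵢ(1_H) = 1_K. Define δ = sup over unit vectors x ∈ K of (⟨∑ᵢ Φᵢ(f'(Aᵢ)Aᵢ) x, x⟩ − ⟨∑ᵢ Φᵢ(Aᵢ) x, x⟩·⟨∑ᵢ Φᵢ(f'(Aᵢ)) x, x⟩). Then ∑ᵢ Φᵢ(f(Aᵢ)) ≤ f(∑ᵢ Φᵢ(Aᵢ)) + δ·1_K. -/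
open scoped InnerProductSpace

/-!
Tangent lines of the convex differentiable `f` give two operator inequalities. The tangent at `t`,
evaluated at a point `s ∈ J`, reads `f t ≤ f s + f' t * t - s * f' t`, so by functional calculus
`f(Aᵢ) ≤ f(s) + f'(Aᵢ)Aᵢ - s f'(Aᵢ)`; applying the unital positive family `Φᵢ` and summing gives
`∑ Φᵢ(f(Aᵢ)) ≤ f(s) + P - s Q` with `P = ∑ Φᵢ(f'(Aᵢ)Aᵢ)` and `Q = ∑ Φᵢ(f'(Aᵢ))`.
For a unit vector `u` take `s = ⟪B u, u⟫` with `B = ∑ Φᵢ(Aᵢ)`; it lies in `J` because the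
spectrum of `B` does. Then `⟪(P - s Q) u, u⟫ ≤ δ`, while the tangent at `s` gives the scalar
Jensen inequality `f(s) ≤ ⟪f(B) u, u⟫`.
-/

theorem ConvexOn.add_deriv_mul_sub_le {f f' : ℝ → ℝ} {J : Set ℝ} (hf : ConvexOn ℝ J f)
    (hf' : ∀ t ∈ J, HasDerivAt f (f' t) t) {s t : ℝ} (hs : s ∈ J) (ht : t ∈ J) :
    f s + f' s * (t - s) ≤ f t := by
  rcases lt_trichotomy s t with hst | rfl | hts
  · have := hf.le_slope_of_hasDerivAt hs ht hst (hf' s hs)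
    rw [slope_def_field, le_div_iff₀ (sub_pos.2 hst)] at this
    linarith
  · simp
  · have := hf.slope_le_of_hasDerivAt ht hs hts (hf' s hs)
    rw [slope_def_field, div_le_iff₀ (sub_pos.2 hts)] at this
    linarith

section CStarAlgebra

variable {A B : Type*} [CStarAlgebra A] [PartialOrder A] [StarOrderedRing A]
  {f f' : ℝ → ℝ} {J : Set ℝ}

theorem ConvexOn.cfc_le_algebraMap_add_cfc_deriv_mul_sub (hf : ConvexOn ℝ J f)
    (hf' : ∀ t ∈ J, HasDerivAt f (f' t) t) (hf'c : ContinuousOn f' J)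
    {a : A} (ha : IsSelfAdjoint a) (hspec : spectrum ℝ a ⊆ J) {s : ℝ} (hs : s ∈ J) :
    cfc f a ≤ algebraMap ℝ A (f s) + (cfc f' a * a - s • cfc f' a) := by
  have hf'a : ContinuousOn f' (spectrum ℝ a) := hf'c.mono hspec
  calc cfc f a ≤ cfc (fun t => f s + (f' t * t - s * f' t)) a := by
        refine cfc_mono (fun t ht => ?_)
          (fun t ht => (hf' t (hspec ht)).continuousAt.continuousWithinAt) (by fun_prop)
        linarith [hf.add_deriv_mul_sub_le hf' (hspec ht) hs]
    _ = _ := by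
        rw [cfc_const_add _ _ _ (by fun_prop), cfc_sub _ _ a (by fun_prop) (by fun_prop),
          cfc_mul _ _ a hf'a (by fun_prop), cfc_id' ℝ a, cfc_const_mul _ _ a]

theorem ConvexOn.algebraMap_add_deriv_smul_sub_le_cfc (hf : ConvexOn ℝ J f)
    (hf' : ∀ t ∈ J, HasDerivAt f (f' t) t)
    {a : A} (ha : IsSelfAdjoint a) (hspec : spectrum ℝ a ⊆ J) {s : ℝ} (hs : s ∈ J) :
    algebraMap ℝ A (f s) + f' s • (a - algebraMap ℝ A s) ≤ cfc f a :=
  calc algebraMap ℝ A (f s) + f' s • (a - algebraMap ℝ A s)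
      = cfc (fun t => f s + f' s * (t - s)) a := by
        rw [cfc_const_add _ _ _ (by fun_prop), cfc_const_mul _ _ a (by fun_prop),
          cfc_sub _ _ a (by fun_prop) (by fun_prop), cfc_id' ℝ a, cfc_const s a]
    _ ≤ cfc f a :=
        cfc_mono (fun t ht => hf.add_deriv_mul_sub_le hf' hs (hspec ht)) (by fun_prop)
          (fun t ht => (hf' t (hspec ht)).continuousAt.continuousWithinAt)

theorem exists_algebraMap_le_and_le_algebraMap {ι : Type*} [Finite ι] [Nonempty ι] [Nontrivial A]
    {a : ι → A} (ha : ∀ i, IsSelfAdjoint (a i)) (hspec : ∀ i, spectrum ℝ (a i) ⊆ J) :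
    ∃ m ∈ J, ∃ M ∈ J, ∀ i, algebraMap ℝ A m ≤ a i ∧ a i ≤ algebraMap ℝ A M := by
  have hcpt : IsCompact (⋃ i, spectrum ℝ (a i)) :=
    isCompact_iUnion fun i => spectrum.isCompact (a i)
  have hne : (⋃ i, spectrum ℝ (a i)).Nonempty := Set.nonempty_iUnion.2
    ⟨Classical.arbitrary ι, ContinuousFunctionalCalculus.spectrum_nonempty _ (ha _)⟩
  obtain ⟨m, hm⟩ := hcpt.exists_isLeast hne
  obtain ⟨M, hM⟩ := hcpt.exists_isGreatest hne
  refine ⟨m, Set.iUnion_subset hspec hm.1, M, Set.iUnion_subset hspec hM.1, fun i => ⟨?_, ?_⟩⟩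
  · exact (algebraMap_le_iff_le_spectrum (ha i)).2 fun t ht => hm.2 (Set.mem_iUnion.2 ⟨i, ht⟩)
  · exact (le_algebraMap_iff_spectrum_le (ha i)).2 fun t ht => hM.2 (Set.mem_iUnion.2 ⟨i, ht⟩)

namespace PositiveLinearMap

variable [CStarAlgebra B] [PartialOrder B] [StarOrderedRing B]
  {ι : Type*} [Fintype ι] (Φ : ι → A →ₚ[ℂ] B) (hunital : ∑ i, Φ i 1 = 1)
include hunital

omit [StarOrderedRing A] [StarOrderedRing B] in
theorem sum_map_algebraMap (r : ℝ) : ∑ i, Φ i (algebraMap ℝ A r) = algebraMap ℝ B r := by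
  simp only [Algebra.algebraMap_eq_smul_one, map_smul_of_tower, ← Finset.smul_sum, hunital]

omit [StarOrderedRing A] in
theorem algebraMap_le_sum_map {a : ι → A} {r : ℝ} (ha : ∀ i, algebraMap ℝ A r ≤ a i) :
    algebraMap ℝ B r ≤ ∑ i, Φ i (a i) :=
  sum_map_algebraMap Φ hunital r ▸ Finset.sum_le_sum fun i _ => OrderHomClass.mono (Φ i) (ha i)

omit [StarOrderedRing A] in
theorem sum_map_le_algebraMap {a : ι → A} {r : ℝ} (ha : ∀ i, a i ≤ algebraMap ℝ A r) :
    ∑ i, Φ i (a i) ≤ algebraMap ℝ B r :=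
  sum_map_algebraMap Φ hunital r ▸ Finset.sum_le_sum fun i _ => OrderHomClass.mono (Φ i) (ha i)

theorem spectrum_sum_map_subset (hJ : J.OrdConnected) {a : ι → A}
    (ha : ∀ i, IsSelfAdjoint (a i)) (hspec : ∀ i, spectrum ℝ (a i) ⊆ J) :
    spectrum ℝ (∑ i, Φ i (a i)) ⊆ J := by
  intro t ht
  have : Nontrivial B := by
    by_contra h
    rw [not_nontrivial_iff_subsingleton] at h
    rwa [spectrum.of_subsingleton] at ht
  have : Nonempty ι := by
    by_contra h
    rw [not_nonempty_iff] at h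
    simp at hunital
  have : Nontrivial A := by
    by_contra h
    rw [not_nontrivial_iff_subsingleton] at h
    simp [Subsingleton.elim (1 : A) 0] at hunital
  obtain ⟨m, hm, M, hM, hmM⟩ := exists_algebraMap_le_and_le_algebraMap ha hspec
  have hsa : IsSelfAdjoint (∑ i, Φ i (a i)) := by cfc_tac
  exact hJ.out hm hM
    ⟨(algebraMap_le_iff_le_spectrum hsa).1
      (algebraMap_le_sum_map Φ hunital fun i => (hmM i).1) t ht,
     (le_algebraMap_iff_spectrum_le hsa).1
      (sum_map_le_algebraMap Φ hunital fun i => (hmM i).2) t ht⟩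

theorem sum_map_cfc_le (hf : ConvexOn ℝ J f) (hf' : ∀ t ∈ J, HasDerivAt f (f' t) t)
    (hf'c : ContinuousOn f' J) {a : ι → A} (ha : ∀ i, IsSelfAdjoint (a i))
    (hspec : ∀ i, spectrum ℝ (a i) ⊆ J) {s : ℝ} (hs : s ∈ J) :
    ∑ i, Φ i (cfc f (a i)) ≤ algebraMap ℝ B (f s) +
      (∑ i, Φ i (cfc f' (a i) * a i) - s • ∑ i, Φ i (cfc f' (a i))) :=
  calc ∑ i, Φ i (cfc f (a i))
      ≤ ∑ i, Φ i (algebraMap ℝ A (f s) + (cfc f' (a i) * a i - s • cfc f' (a i))) :=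
        Finset.sum_le_sum fun i _ => OrderHomClass.mono (Φ i)
          (hf.cfc_le_algebraMap_add_cfc_deriv_mul_sub hf' hf'c (ha i) (hspec i) hs)
    _ = _ := by
        simp only [map_add, map_sub, map_smul_of_tower, Finset.sum_add_distrib,
          Finset.sum_sub_distrib, ← Finset.smul_sum, sum_map_algebraMap Φ hunital]

end PositiveLinearMap

end CStarAlgebra

namespace ContinuousLinearMap

section RCLike

variable {𝕜 E : Type*} [RCLike 𝕜] [NormedAddCommGroup E] [InnerProductSpace 𝕜 E]

theorem re_inner_apply_le_of_le {T S : E →L[𝕜] E} (h : T ≤ S) (x : E) :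
    RCLike.re ⟪T x, x⟫_𝕜 ≤ RCLike.re ⟪S x, x⟫_𝕜 := by
  have := h.re_inner_nonneg_left x
  rwa [sub_apply, inner_sub_left, map_sub, sub_nonneg] at this

theorem abs_re_inner_apply_le (T : E →L[𝕜] E) {u : E} (hu : ‖u‖ = 1) :
    |RCLike.re ⟪T u, u⟫_𝕜| ≤ ‖T‖ :=
  calc |RCLike.re ⟪T u, u⟫_𝕜| ≤ ‖T u‖ * ‖u‖ :=
        (RCLike.abs_re_le_norm _).trans (norm_inner_le_norm _ _)
    _ ≤ ‖T‖ * ‖u‖ * ‖u‖ := by gcongr; exact T.le_opNorm u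
    _ = ‖T‖ := by simp [hu]

theorem bddAbove_range_re_inner_apply_sub_mul (P Q R : E →L[𝕜] E) :
    BddAbove (Set.range fun u : {u : E // ‖u‖ = 1} =>
      RCLike.re ⟪P u, u⟫_𝕜 - RCLike.re ⟪Q u, u⟫_𝕜 * RCLike.re ⟪R u, u⟫_𝕜) := by
  refine ⟨‖P‖ + ‖Q‖ * ‖R‖, ?_⟩
  rintro _ ⟨⟨u, hu⟩, rfl⟩
  calc RCLike.re ⟪P u, u⟫_𝕜 - RCLike.re ⟪Q u, u⟫_𝕜 * RCLike.re ⟪R u, u⟫_𝕜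
      ≤ |RCLike.re ⟪P u, u⟫_𝕜| + |RCLike.re ⟪Q u, u⟫_𝕜| * |RCLike.re ⟪R u, u⟫_𝕜| := by
        rw [← abs_mul]
        linarith [le_abs_self (RCLike.re ⟪P u, u⟫_𝕜),
          neg_abs_le (RCLike.re ⟪Q u, u⟫_𝕜 * RCLike.re ⟪R u, u⟫_𝕜)]
    _ ≤ ‖P‖ + ‖Q‖ * ‖R‖ := by
        gcongr
        exacts [P.abs_re_inner_apply_le hu, Q.abs_re_inner_apply_le hu,
          R.abs_re_inner_apply_le hu]

theorem le_of_forall_norm_eq_one [CompleteSpace E] {T S : E →L[𝕜] E} (hT : IsSelfAdjoint T)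
    (hS : IsSelfAdjoint S) (h : ∀ u, ‖u‖ = 1 → RCLike.re ⟪T u, u⟫_𝕜 ≤ RCLike.re ⟪S u, u⟫_𝕜) :
    T ≤ S := by
  refine isPositive_def'.2 ⟨hS.sub hT, fun x => ?_⟩
  rcases eq_or_ne x 0 with rfl | hx
  · simp [reApplyInnerSelf_apply]
  have : 0 ≤ (S - T).reApplyInnerSelf ((‖x‖⁻¹ : 𝕜) • x) := by
    rw [reApplyInnerSelf_apply, sub_apply, inner_sub_left, map_sub, sub_nonneg]
    exact h _ (norm_smul_inv_norm hx)
  rw [reApplyInnerSelf_smul] at this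
  exact nonneg_of_mul_nonneg_right this (by simp [hx])

end RCLike

section Complex

variable {E : Type*} [NormedAddCommGroup E] [InnerProductSpace ℂ E]

theorem re_inner_smul_apply (r : ℝ) (T : E →L[ℂ] E) (u : E) :
    RCLike.re ⟪(r • T) u, u⟫_ℂ = r * RCLike.re ⟪T u, u⟫_ℂ := by
  simp [← Complex.coe_smul, mul_comm]

theorem re_inner_algebraMap_apply {u : E} (hu : ‖u‖ = 1) (r : ℝ) :
    RCLike.re ⟪algebraMap ℝ (E →L[ℂ] E) r u, u⟫_ℂ = r := by
  simp [Algebra.algebraMap_eq_smul_one, hu]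

theorem re_inner_apply_mem_of_spectrum_subset [CompleteSpace E] {J : Set ℝ} (hJ : J.OrdConnected)
    {T : E →L[ℂ] E} (hT : IsSelfAdjoint T) (hspec : spectrum ℝ T ⊆ J) {u : E} (hu : ‖u‖ = 1) :
    RCLike.re ⟪T u, u⟫_ℂ ∈ J := by
  have : Nontrivial E := ⟨u, 0, norm_ne_zero_iff.1 (by simp [hu])⟩
  obtain ⟨m, hm, M, hM, hmM⟩ :=
    exists_algebraMap_le_and_le_algebraMap (ι := Unit) (fun _ => hT) (fun _ => hspec)
  have hmT := re_inner_apply_le_of_le (hmM ()).1 u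
  have hTM := re_inner_apply_le_of_le (hmM ()).2 u
  rw [re_inner_algebraMap_apply hu] at hmT hTM
  exact hJ.out hm hM ⟨hmT, hTM⟩

theorem _root_.ConvexOn.map_re_inner_apply_le_re_inner_cfc_apply [CompleteSpace E] {f f' : ℝ → ℝ}
    {J : Set ℝ} (hf : ConvexOn ℝ J f) (hf' : ∀ t ∈ J, HasDerivAt f (f' t) t) {T : E →L[ℂ] E}
    (hT : IsSelfAdjoint T) (hspec : spectrum ℝ T ⊆ J) {u : E} (hu : ‖u‖ = 1) :
    f (RCLike.re ⟪T u, u⟫_ℂ) ≤ RCLike.re ⟪cfc f T u, u⟫_ℂ := by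
  have hs := re_inner_apply_mem_of_spectrum_subset hf.1.ordConnected hT hspec hu
  have := re_inner_apply_le_of_le (hf.algebraMap_add_deriv_smul_sub_le_cfc hf' hT hspec hs) u
  rwa [add_apply, inner_add_left, map_add, re_inner_smul_apply, sub_apply, inner_sub_left,
    map_sub, re_inner_algebraMap_apply hu, re_inner_algebraMap_apply hu, sub_self, mul_zero,
    add_zero] at this

end Complex

end ContinuousLinearMap

/-- Reverse operator Jensen inequality for convex (not necessarily operator convex) `f`. -/
theorem reverse_operator_jensen {H K : Type*}
    [NormedAddCommGroup H] [InnerProductSpace ℂ H] [CompleteSpace H]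
    [NormedAddCommGroup K] [InnerProductSpace ℂ K] [CompleteSpace K]
    (f f' : ℝ → ℝ) (J : Set ℝ) (hf : ConvexOn ℝ J f)
    (hf' : ∀ t ∈ J, HasDerivAt f (f' t) t) (hf'c : ContinuousOn f' J)
    (n : ℕ) (A : Fin n → H →L[ℂ] H)
    (Φ : Fin n → (H →L[ℂ] H) →ₗ[ℂ] (K →L[ℂ] K))
    (hA : ∀ i, IsSelfAdjoint (A i)) (hspec : ∀ i, spectrum ℝ (A i) ⊆ J)
    (hΦpos : ∀ i, ∀ T : H →L[ℂ] H, T.IsPositive → (Φ i T).IsPositive)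
    (hunital : ∑ i, Φ i 1 = 1)
    (δ : ℝ)
    (hδ : δ = ⨆ x : {x : K // ‖x‖ = 1},
      (RCLike.re ⟪(∑ i, Φ i (cfc f' (A i) * A i)) (x : K), (x : K)⟫_ℂ
        - RCLike.re ⟪(∑ i, Φ i (A i)) (x : K), (x : K)⟫_ℂ
          * RCLike.re ⟪(∑ i, Φ i (cfc f' (A i))) (x : K), (x : K)⟫_ℂ)) :
    ∑ i, Φ i (cfc f (A i)) ≤
      cfc f (∑ i, Φ i (A i)) + δ • (1 : K →L[ℂ] K) := by
  let Ψ : Fin n → (H →L[ℂ] H) →ₚ[ℂ] (K →L[ℂ] K) := fun i => .mk₀ (Φ i) fun T hT => by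
    rw [ContinuousLinearMap.nonneg_iff_isPositive] at hT ⊢
    exact hΦpos i T hT
  have hΨΦ : ∀ i T, Ψ i T = Φ i T := fun _ _ => rfl
  have hΨ : ∑ i, Ψ i 1 = 1 := hunital
  set B := ∑ i, Φ i (A i)
  have hB : IsSelfAdjoint B := isSelfAdjoint_sum _ fun i _ => (hA i).map' (Ψ i)
  have hBspec : spectrum ℝ B ⊆ J :=
    PositiveLinearMap.spectrum_sum_map_subset Ψ hΨ hf.1.ordConnected hA hspec
  refine ContinuousLinearMap.le_of_forall_norm_eq_one
    (isSelfAdjoint_sum _ fun i _ => (cfc_predicate f (A i)).map' (Ψ i)) (by cfc_tac) fun u hu => ?_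
  have hs : RCLike.re ⟪B u, u⟫_ℂ ∈ J :=
    ContinuousLinearMap.re_inner_apply_mem_of_spectrum_subset hf.1.ordConnected hB hBspec hu
  have hupper := ContinuousLinearMap.re_inner_apply_le_of_le
    (PositiveLinearMap.sum_map_cfc_le Ψ hΨ hf hf' hf'c hA hspec hs) u
  rw [add_apply, inner_add_left, map_add, sub_apply, inner_sub_left, map_sub,
    ContinuousLinearMap.re_inner_smul_apply, ContinuousLinearMap.re_inner_algebraMap_apply hu]
    at hupper
  simp only [hΨΦ] at hupper
  have hδu := hδ ▸ le_ciSup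
    (ContinuousLinearMap.bddAbove_range_re_inner_apply_sub_mul _ _ _) (⟨u, hu⟩ : {x : K // ‖x‖ = 1})
  dsimp only at hδu
  have hlower := hf.map_re_inner_apply_le_re_inner_cfc_apply hf' hB hBspec hu
  rw [← Algebra.algebraMap_eq_smul_one, add_apply, inner_add_left, map_add,
    ContinuousLinearMap.re_inner_algebraMap_apply hu]
  linarith
end

section
/- Let A₁,…,Aₙ be positive operators on H, Φ₁,…,Φₙ : B(H) → B(K) positive linear maps with ∑ᵢ Φᵢ(1_H) = 1_K, and p ≥ 1. Write S = ∑ᵢ Φᵢ(Aᵢ) and define ζ = sup over unit vectors x ∈ K of (⟨Sᵖ x, x⟩ − ⟨S x, x⟩·⟨S^{p−1} x, x⟩). Then Sᵖ ≤ ∑ᵢ Φᵢ(Aᵢᵖ) + p·ζ·1_K. -/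
/-!
For `s ≥ 0`, the tangent line `s ^ p + p s ^ (p - 1) (t - s)` of the convex function `t ^ p` lies
below it on `[0, ∞)`. Applied to each `Aᵢ` through the functional calculus and pushed through the
unital positive maps `Φᵢ`, this gives `p s ^ (p - 1) S + (s ^ p - p s ^ p) ≤ E := ∑ Φᵢ (Aᵢ ^ p)`;
at a unit vector `x` with `s = ⟪S x, x⟫` this is the Jensen-type bound `s ^ p ≤ ⟪E x, x⟫`.
Conversely, the tangents at the points `t` of the spectrum of `S`, evaluated at `s`, give
`p s S ^ (p - 1) ≤ (p - 1) S ^ p + s ^ p`, so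
`⟪S ^ p x, x⟫ ≤ p (⟪S ^ p x, x⟫ - s ⟪S ^ (p - 1) x, x⟫) + s ^ p ≤ p ζ + ⟪E x, x⟫`.
-/

open scoped InnerProductSpace

namespace Real

theorem rpow_add_mul_sub_le_rpow {p s t : ℝ} (hp : 1 ≤ p) (hs : 0 ≤ s) (ht : 0 ≤ t) :
    s ^ p + p * s ^ (p - 1) * (t - s) ≤ t ^ p := by
  rcases hs.eq_or_lt with rfl | hs
  · rcases hp.eq_or_lt with rfl | hp
    · simp
    · rw [zero_rpow (by positivity), zero_rpow (by linarith)]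
      simpa using rpow_nonneg ht p
  · have hbern := one_add_mul_self_le_rpow_one_add (s := t / s - 1)
      (by linarith [div_nonneg ht hs.le]) hp
    rw [add_sub_cancel, div_rpow ht hs.le, le_div_iff₀ (rpow_pos_of_pos hs p)] at hbern
    have hsp : s ^ p = s ^ (p - 1) * s := by
      rw [← rpow_add_one hs.ne', sub_add_cancel]
    calc s ^ p + p * s ^ (p - 1) * (t - s) = (1 + p * (t / s - 1)) * s ^ p := by
          rw [hsp]; field_simp
      _ ≤ t ^ p := hbern

theorem mul_mul_rpow_sub_one_le {p s t : ℝ} (hp : 1 ≤ p) (hs : 0 ≤ s) (ht : 0 ≤ t) :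
    p * s * t ^ (p - 1) ≤ (p - 1) * t ^ p + s ^ p := by
  have htp : t ^ p = t ^ (p - 1) * t := by
    rw [← rpow_add_one' ht (by linarith), sub_add_cancel]
  have := rpow_add_mul_sub_le_rpow hp ht hs
  rw [htp] at this ⊢
  linarith

end Real

section CFC

variable {A : Type*} [CStarAlgebra A] [PartialOrder A] [StarOrderedRing A]

theorem tangent_le_cfc_rpow {p : ℝ} (hp : 1 ≤ p) {a : A} (ha : 0 ≤ a) {s : ℝ} (hs : 0 ≤ s) :
    (p * s ^ (p - 1)) • a + (s ^ p - p * s ^ (p - 1) * s) • (1 : A) ≤ cfc (· ^ p : ℝ → ℝ) a := by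
  have hle := cfc_mono (a := a) (g := (· ^ p))
    (f := fun t : ℝ => (p * s ^ (p - 1)) * t + (s ^ p - p * s ^ (p - 1) * s))
    (fun t ht => by
      have := Real.rpow_add_mul_sub_le_rpow hp hs (spectrum_nonneg_of_nonneg ha ht)
      linarith)
    (by fun_prop) (Real.continuous_rpow_const (by linarith)).continuousOn
  rwa [cfc_add .., cfc_const_mul_id _ _ ha.isSelfAdjoint, cfc_const _ _ ha.isSelfAdjoint,
    Algebra.algebraMap_eq_smul_one] at hle

theorem smul_cfc_rpow_sub_one_le {p : ℝ} (hp : 1 ≤ p) {a : A} (ha : 0 ≤ a) {s : ℝ} (hs : 0 ≤ s) :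
    (p * s) • cfc (· ^ (p - 1) : ℝ → ℝ) a ≤
      (p - 1) • cfc (· ^ p : ℝ → ℝ) a + s ^ p • (1 : A) := by
  have hp₀ : Continuous (· ^ p : ℝ → ℝ) := Real.continuous_rpow_const (by linarith)
  have hp₁ : Continuous (· ^ (p - 1) : ℝ → ℝ) := Real.continuous_rpow_const (by linarith)
  have hle := cfc_mono (a := a) (f := fun t : ℝ => (p * s) * t ^ (p - 1))
    (g := fun t : ℝ => (p - 1) * t ^ p + s ^ p)
    (fun t ht => Real.mul_mul_rpow_sub_one_le hp hs (spectrum_nonneg_of_nonneg ha ht))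
  rwa [cfc_const_mul .., cfc_add .., cfc_const_mul .., cfc_const _ _ ha.isSelfAdjoint,
    Algebra.algebraMap_eq_smul_one] at hle

theorem PositiveLinearMap.apply_cfc_rpow_le (ω : A →ₚ[ℝ] ℝ) (hω : ω 1 = 1) {p : ℝ} (hp : 1 ≤ p)
    {a b : A} (ha : 0 ≤ a)
    (hb : ∀ s, 0 ≤ s → (p * s ^ (p - 1)) • a + (s ^ p - p * s ^ (p - 1) * s) • (1 : A) ≤ b) :
    ω (cfc (· ^ p : ℝ → ℝ) a) ≤
      ω b + p * (ω (cfc (· ^ p : ℝ → ℝ) a) - ω a * ω (cfc (· ^ (p - 1) : ℝ → ℝ) a)) := by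
  set s := ω a
  have hs : 0 ≤ s := ω.map_nonneg ha
  have hjensen : s ^ p ≤ ω b := by
    have := OrderHomClass.mono ω (hb s hs)
    simp only [map_add, map_smul, hω, smul_eq_mul] at this
    linarith
  have htangent := OrderHomClass.mono ω (smul_cfc_rpow_sub_one_le hp ha hs)
  simp only [map_add, map_smul, hω, smul_eq_mul] at htangent
  linarith

end CFC

theorem affine_le_sum_map {ι A B : Type*} [Fintype ι]
    [CStarAlgebra A] [PartialOrder A] [StarOrderedRing A]
    [CStarAlgebra B] [PartialOrder B] [StarOrderedRing B]
    (Φ : ι → A →ₗ[ℂ] B) (hΦ : ∀ i a, 0 ≤ a → 0 ≤ Φ i a) (hunital : ∑ i, Φ i 1 = 1)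
    {a b : ι → A} {c d : ℝ} (h : ∀ i, c • a i + d • (1 : A) ≤ b i) :
    c • ∑ i, Φ i (a i) + d • (1 : B) ≤ ∑ i, Φ i (b i) := by
  rw [← hunital, Finset.smul_sum, Finset.smul_sum, ← Finset.sum_add_distrib]
  refine Finset.sum_le_sum fun i _ => ?_
  have := hΦ i _ (sub_nonneg.mpr (h i))
  rwa [map_sub, map_add, LinearMap.map_smul_of_tower, LinearMap.map_smul_of_tower,
    sub_nonneg] at this

namespace ContinuousLinearMap

variable {E : Type*} [NormedAddCommGroup E] [InnerProductSpace ℂ E] [CompleteSpace E]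

noncomputable def vectorFunctional (x : E) : (E →L[ℂ] E) →ₚ[ℝ] ℝ :=
  .mk₀ { toFun := fun T => RCLike.re ⟪T x, x⟫_ℂ
         map_add' := fun S T => by simp
         map_smul' := fun c T => by simp }
    fun T hT => ((nonneg_iff_isPositive T).mp hT).re_inner_nonneg_left x

@[simp]
theorem vectorFunctional_apply (x : E) (T : E →L[ℂ] E) :
    vectorFunctional x T = RCLike.re ⟪T x, x⟫_ℂ := rfl

theorem vectorFunctional_one {x : E} (hx : ‖x‖ = 1) :
    vectorFunctional x (1 : E →L[ℂ] E) = 1 := by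
  simp [hx]

theorem vectorFunctional_le_opNorm {x : E} (hx : ‖x‖ = 1) (T : E →L[ℂ] E) :
    vectorFunctional x T ≤ ‖T‖ :=
  calc RCLike.re ⟪T x, x⟫_ℂ ≤ ‖T x‖ * ‖x‖ := re_inner_le_norm _ _
    _ ≤ ‖T‖ := by simpa [hx] using T.le_opNorm x

theorem bddAbove_vectorFunctional_sub_mul (T : E →L[ℂ] E) {S S' : E →L[ℂ] E} (hS : 0 ≤ S)
    (hS' : 0 ≤ S') :
    BddAbove (Set.range fun x : {x : E // ‖x‖ = 1} =>
      vectorFunctional (x : E) T - vectorFunctional (x : E) S * vectorFunctional (x : E) S') := by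
  refine ⟨‖T‖, ?_⟩
  rintro _ ⟨x, rfl⟩
  have := vectorFunctional_le_opNorm x.2 T
  have := mul_nonneg ((vectorFunctional (x : E)).map_nonneg hS)
    ((vectorFunctional (x : E)).map_nonneg hS')
  dsimp only
  linarith

theorem le_of_forall_vectorFunctional_le {T T' : E →L[ℂ] E}
    (hsa : IsSelfAdjoint (T' - T))
    (h : ∀ x : E, ‖x‖ = 1 → vectorFunctional x T ≤ vectorFunctional x T') : T ≤ T' := by
  refine ⟨hsa.isSymmetric, fun x => ?_⟩
  rcases eq_or_ne x 0 with rfl | hx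
  · simp [reApplyInnerSelf_apply]
  · have hnorm : (‖x‖ : ℂ) ≠ 0 := by exact_mod_cast norm_ne_zero_iff.mpr hx
    have hunit : ‖(‖x‖ : ℂ)⁻¹ • x‖ = 1 := by simp [norm_smul, hx]
    have hscale := (T' - T).reApplyInnerSelf_smul ((‖x‖ : ℂ)⁻¹ • x) (c := (‖x‖ : ℂ))
    rw [smul_inv_smul₀ hnorm] at hscale
    rw [hscale]
    have hle : 0 ≤ vectorFunctional ((‖x‖ : ℂ)⁻¹ • x) (T' - T) := by
      rw [map_sub, sub_nonneg]
      exact h _ hunit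
    exact mul_nonneg (sq_nonneg _) hle

end ContinuousLinearMap

open ContinuousLinearMap

/-- Operator Jensen-type inequality for powers `p ≥ 1` without operator convexity. -/
theorem operator_jensen_pow {H K : Type*}
    [NormedAddCommGroup H] [InnerProductSpace ℂ H] [CompleteSpace H]
    [NormedAddCommGroup K] [InnerProductSpace ℂ K] [CompleteSpace K]
    (p : ℝ) (hp : 1 ≤ p)
    (n : ℕ) (A : Fin n → H →L[ℂ] H)
    (Φ : Fin n → (H →L[ℂ] H) →ₗ[ℂ] (K →L[ℂ] K))
    (hA : ∀ i, (A i).IsPositive)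
    (hΦpos : ∀ i, ∀ T : H →L[ℂ] H, T.IsPositive → (Φ i T).IsPositive)
    (hunital : ∑ i, Φ i 1 = 1)
    (S : K →L[ℂ] K) (hS : S = ∑ i, Φ i (A i))
    (ζ : ℝ)
    (hζ : ζ = ⨆ x : {x : K // ‖x‖ = 1},
      (RCLike.re ⟪cfc (fun t : ℝ => t ^ p) S (x : K), (x : K)⟫_ℂ
        - RCLike.re ⟪S (x : K), (x : K)⟫_ℂ
          * RCLike.re ⟪cfc (fun t : ℝ => t ^ (p - 1)) S (x : K), (x : K)⟫_ℂ)) :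
    cfc (fun t : ℝ => t ^ p) S ≤
      ∑ i, Φ i (cfc (fun t : ℝ => t ^ p) (A i)) + (p * ζ) • (1 : K →L[ℂ] K) := by
  have hΦ : ∀ i T, 0 ≤ T → 0 ≤ Φ i T := fun i T hT =>
    (nonneg_iff_isPositive _).mpr (hΦpos i T ((nonneg_iff_isPositive T).mp hT))
  have hA₀ : ∀ i, 0 ≤ A i := fun i => (nonneg_iff_isPositive _).mpr (hA i)
  have hS₀ : 0 ≤ S := hS ▸ Finset.sum_nonneg fun i _ => hΦ i _ (hA₀ i)
  set E := ∑ i, Φ i (cfc (fun t : ℝ => t ^ p) (A i))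
  have hE₀ : 0 ≤ E := Finset.sum_nonneg fun i _ => hΦ i _ (cfc_nonneg fun t ht =>
    Real.rpow_nonneg (spectrum_nonneg_of_nonneg (hA₀ i) ht) p)
  have htangent (s : ℝ) (hs : 0 ≤ s) :
      (p * s ^ (p - 1)) • S + (s ^ p - p * s ^ (p - 1) * s) • (1 : K →L[ℂ] K) ≤ E :=
    hS ▸ affine_le_sum_map Φ hΦ hunital fun i => tangent_le_cfc_rpow hp (hA₀ i) hs
  have hgap (x : K) (hx : ‖x‖ = 1) :
      vectorFunctional x (cfc (fun t : ℝ => t ^ p) S)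
        - vectorFunctional x S * vectorFunctional x (cfc (fun t : ℝ => t ^ (p - 1)) S) ≤ ζ :=
    hζ ▸ le_ciSup (bddAbove_vectorFunctional_sub_mul _ hS₀ (cfc_nonneg fun t ht =>
      Real.rpow_nonneg (spectrum_nonneg_of_nonneg hS₀ ht) _)) ⟨x, hx⟩
  refine le_of_forall_vectorFunctional_le ?_ fun x hx => ?_
  · exact (hE₀.isSelfAdjoint.add ((IsSelfAdjoint.all _).smul (.one _))).sub (cfc_predicate _ _)
  · have := (vectorFunctional x).apply_cfc_rpow_le (vectorFunctional_one hx) hp hS₀ htangent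
    rw [map_add, map_smul, vectorFunctional_one hx, smul_eq_mul, mul_one]
    linarith [mul_le_mul_of_nonneg_left (hgap x hx) (by linarith : (0 : ℝ) ≤ p)]
end

section
/- Let A, B be positive invertible operators on H and Φ : B(H) → B(K) a unital positive linear map. Define δ = sup over unit vectors x ∈ K of (⟨Φ(A+B)^{-1/2} Φ(A(A+B)^{-1}A) Φ(A+B)^{-1/2} x, x⟩ − ⟨Φ(A+B)^{-1/2} Φ(A) Φ(A+B)^{-1/2} x, x⟩²). Then Φ(A) : Φ(B) ≤ Φ(A : B) + 2δ·Φ(A+B), where X : Y = (X^{-1} + Y^{-1})^{-1} denotes the parallel sum. -/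
open scoped InnerProductSpace
open CFC Ring RCLike

/-!
Since `X : Y = X - X (X + Y)⁻¹ X`, the claim is `Φ(A T⁻¹ A) - Φ(A) Φ(T)⁻¹ Φ(A) ≤ 2δ Φ(T)` with
`T = A + B`; compressing by `Φ(T)^(-1/2)` turns it into `C - D² ≤ 2δ`, where `C` and `D` are the
compressions of `Φ(A T⁻¹ A)` and `Φ(A)`. As `⟪D² x, x⟫ = ‖D x‖² ≥ ⟪D x, x⟫²`, in fact `C - D² ≤ δ`.
Finally `δ ≥ 0`: positivity of `(A - c T) T⁻¹ (A - c T)` and of `Φ` give `C - 2c D + c² ≥ 0` for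
every real `c`, and `c = ⟪D x, x⟫` yields `⟪D x, x⟫² ≤ ⟪C x, x⟫`.
-/

lemma Ring.inverse_inverse_add_inverse {R : Type*} [Ring R] {x y : R} (hx : IsUnit x)
    (hy : IsUnit y) (hxy : IsUnit (x + y)) :
    (x⁻¹ʳ + y⁻¹ʳ)⁻¹ʳ = x - x * (x + y)⁻¹ʳ * x := by
  lift x to Rˣ using hx
  lift y to Rˣ using hy
  obtain ⟨w, hw⟩ := hxy
  have hsum : ((x : R)⁻¹ʳ + (y : R)⁻¹ʳ) = ↑(x⁻¹ * w * y⁻¹) := by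
    rw [Ring.inverse_unit, Ring.inverse_unit, Units.val_mul, Units.val_mul, hw, mul_add, add_mul,
      Units.inv_mul, one_mul, mul_assoc, Units.mul_inv, mul_one, add_comm]
  have hy : (y : R) = w - x := by rw [hw]; abel
  rw [hsum, ← hw, Ring.inverse_unit, Ring.inverse_unit, mul_inv_rev, mul_inv_rev, inv_inv, inv_inv,
    Units.val_mul, Units.val_mul, hy, sub_mul, Units.mul_inv_cancel_left, mul_assoc]

section CStarAlgebra

variable {A B : Type*} [CStarAlgebra A] [PartialOrder A] [StarOrderedRing A]
  [CStarAlgebra B] [PartialOrder B] [StarOrderedRing B]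

lemma IsStrictlyPositive.map_of_map_nonneg (Φ : A →ₗ[ℂ] B) (hΦ : ∀ a, 0 ≤ a → 0 ≤ Φ a)
    (hΦ1 : Φ 1 = 1) {a : A} (ha : IsStrictlyPositive a) : IsStrictlyPositive (Φ a) := by
  nontriviality B
  have : Nontrivial A := ⟨1, 0, fun h => one_ne_zero (by rw [← hΦ1, h, map_zero])⟩
  obtain ⟨ε, hε, hεa⟩ := (exists_pos_algebraMap_le_iff ha.isSelfAdjoint).2
    fun x hx => ha.spectrum_pos hx
  have hmap : Φ (algebraMap ℝ A ε) = algebraMap ℝ B ε := by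
    rw [Algebra.algebraMap_eq_smul_one, Algebra.algebraMap_eq_smul_one,
      LinearMap.map_smul_of_tower, hΦ1]
  refine (isStrictlyPositive_algebraMap hε).of_le ?_
  rw [← hmap, ← sub_nonneg, ← map_sub]
  exact hΦ _ (sub_nonneg.2 hεa)

lemma mul_inverse_mul_sub_smul_add_smul_nonneg {a t : A} (ha : IsSelfAdjoint a)
    (ht : IsStrictlyPositive t) (c : ℝ) :
    0 ≤ a * t⁻¹ʳ * a - (2 * c) • a + c ^ 2 • t := by
  have h : a * t⁻¹ʳ * a - (2 * c) • a + c ^ 2 • t =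
      star (a - c • t) * t⁻¹ʳ * (a - c • t) := by
    have h1 : t * t⁻¹ʳ = 1 := Ring.mul_inverse_cancel t ht.isUnit
    have h2 : t⁻¹ʳ * t = 1 := Ring.inverse_mul_cancel t ht.isUnit
    rw [star_sub, star_smul, ha.star_eq, ht.isSelfAdjoint.star_eq, star_trivial]
    simp only [sub_mul, mul_sub, smul_mul_assoc, mul_smul_comm, mul_assoc, h2, mul_one]
    simp only [← mul_assoc, h1, one_mul]
    module
  rw [h]
  exact star_left_conjugate_nonneg ht.ringInverse.nonneg _

lemma le_smul_of_conjugate_rpow_neg_one_half_le {s x : A} (hs : IsStrictlyPositive s) {r : ℝ}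
    (h : s ^ (-(1 / 2) : ℝ) * x * s ^ (-(1 / 2) : ℝ) ≤ r • 1) : x ≤ r • s := by
  have hsa : IsSelfAdjoint (s ^ (1 / 2 : ℝ)) := rpow_nonneg.isSelfAdjoint
  have hl : s ^ (1 / 2 : ℝ) * s ^ (-(1 / 2) : ℝ) = 1 := rpow_mul_rpow_neg _ hs
  have hr : s ^ (-(1 / 2) : ℝ) * s ^ (1 / 2 : ℝ) = 1 := rpow_neg_mul_rpow _ hs
  have hh : s ^ (1 / 2 : ℝ) * s ^ (1 / 2 : ℝ) = s := by
    rw [← rpow_add hs.isUnit]; norm_num; exact rpow_one s hs.nonneg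
  have e1 : s ^ (1 / 2 : ℝ) * (s ^ (-(1 / 2) : ℝ) * x * s ^ (-(1 / 2) : ℝ)) * s ^ (1 / 2 : ℝ)
      = x := by
    rw [← mul_assoc, ← mul_assoc, hl, one_mul, mul_assoc, hr, mul_one]
  have e2 : s ^ (1 / 2 : ℝ) * (r • 1) * s ^ (1 / 2 : ℝ) = r • s := by
    rw [mul_smul_comm, mul_one, smul_mul_assoc, hh]
  simpa only [e1, e2] using hsa.conjugate_le_conjugate h

lemma conjugate_rpow_neg_one_half_mul_inverse_mul {s : A} (hs : IsStrictlyPositive s)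
    (x y : A) :
    s ^ (-(1 / 2) : ℝ) * (x * s⁻¹ʳ * y) * s ^ (-(1 / 2) : ℝ) =
      (s ^ (-(1 / 2) : ℝ) * x * s ^ (-(1 / 2) : ℝ)) *
        (s ^ (-(1 / 2) : ℝ) * y * s ^ (-(1 / 2) : ℝ)) := by
  have hm : s ^ (-(1 / 2) : ℝ) * s ^ (-(1 / 2) : ℝ) = s⁻¹ʳ := by
    rw [← rpow_add hs.isUnit, inverse_eq_rpow_neg_one hs]; norm_num
  simp only [← hm, mul_assoc]

lemma conjugate_map_mul_inverse_mul_sub_smul_add_smul_nonneg (Φ : A →ₗ[ℂ] B)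
    (hΦ : ∀ a, 0 ≤ a → 0 ≤ Φ a) {a t : A} (ha : IsSelfAdjoint a) (ht : IsStrictlyPositive t)
    (hs : IsStrictlyPositive (Φ t)) (c : ℝ) :
    0 ≤ Φ t ^ (-(1 / 2) : ℝ) * Φ (a * t⁻¹ʳ * a) * Φ t ^ (-(1 / 2) : ℝ)
      - (2 * c) • (Φ t ^ (-(1 / 2) : ℝ) * Φ a * Φ t ^ (-(1 / 2) : ℝ)) + c ^ 2 • 1 := by
  have h := conjugate_nonneg_of_nonneg (hΦ _ (mul_inverse_mul_sub_smul_add_smul_nonneg ha ht c))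
    (rpow_nonneg (a := Φ t) (y := -(1 / 2)))
  rw [map_add, map_sub] at h
  simpa only [LinearMap.map_smul_of_tower, mul_add, mul_sub, add_mul, sub_mul, mul_smul_comm,
    smul_mul_assoc, conjugate_rpow_neg_one_half _ hs] using h

end CStarAlgebra

namespace ContinuousLinearMap

section RCLike

variable {𝕜 E : Type*} [RCLike 𝕜] [NormedAddCommGroup E] [InnerProductSpace 𝕜 E]
  [CompleteSpace E]

lemma nonneg_of_forall_norm_eq_one {T : E →L[𝕜] E} (hT : IsSelfAdjoint T)
    (h : ∀ x, ‖x‖ = 1 → 0 ≤ T.reApplyInnerSelf x) : 0 ≤ T := by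
  refine (nonneg_iff_isPositive T).2 (isPositive_def'.2 ⟨hT, fun x => ?_⟩)
  rcases eq_or_ne x 0 with rfl | hx
  · simp [reApplyInnerSelf_apply]
  · have hunit : ‖((‖x‖⁻¹ : ℝ) : 𝕜) • x‖ = 1 := by simp [norm_smul, hx]
    have h' := h _ hunit
    rw [reApplyInnerSelf_smul] at h'
    exact (mul_nonneg_iff_of_pos_left (pow_pos (norm_pos_iff.2 (by simpa using hx)) 2)).1 h'

end RCLike

section Complex

variable {E : Type*} [NormedAddCommGroup E] [InnerProductSpace ℂ E]

lemma sq_re_inner_le_re_inner {C D : E →L[ℂ] E}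
    (h : ∀ c : ℝ, 0 ≤ C - (2 * c) • D + c ^ 2 • 1) {x : E} (hx : ‖x‖ = 1) :
    re ⟪D x, x⟫_ℂ ^ 2 ≤ re ⟪C x, x⟫_ℂ := by
  have h' := ((nonneg_iff_isPositive _).1 (h (re ⟪D x, x⟫_ℂ))).re_inner_nonneg_left x
  simp only [add_apply, sub_apply, smul_apply, one_apply_eq_self, inner_add_left, inner_sub_left,
    real_smul_eq_coe_smul (K := ℂ), inner_smul_left, conj_ofReal, map_add, map_sub, re_ofReal_mul,
    inner_self_eq_norm_sq, hx] at h'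
  nlinarith

lemma sub_mul_self_le_smul_one [CompleteSpace E] {C D : E →L[ℂ] E} (hC : IsSelfAdjoint C)
    (hD : IsSelfAdjoint D) {r : ℝ} (h : ∀ x, ‖x‖ = 1 → re ⟪C x, x⟫_ℂ - re ⟪D x, x⟫_ℂ ^ 2 ≤ r) :
    C - D * D ≤ r • 1 := by
  refine sub_nonneg.1 (nonneg_of_forall_norm_eq_one ?_ fun x hx => ?_)
  · have hDD : IsSelfAdjoint (D * D) := by
      simpa [hD.star_eq] using IsSelfAdjoint.star_mul_self D
    exact ((IsSelfAdjoint.all r).smul (.one _)).sub (hC.sub hDD)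
  · have hDD : ⟪(D * D) x, x⟫_ℂ = ⟪D x, D x⟫_ℂ := hD.isSymmetric (D x) x
    have hcs : re ⟪D x, x⟫_ℂ ^ 2 ≤ ‖D x‖ ^ 2 := by
      have := (abs_re_le_norm ⟪D x, x⟫_ℂ).trans (norm_inner_le_norm (D x) x)
      rw [hx, mul_one] at this
      exact sq_le_sq' (abs_le.1 this).1 (abs_le.1 this).2
    have := h x hx
    simp only [reApplyInnerSelf_apply, sub_apply, smul_apply, one_apply_eq_self, inner_sub_left,
      real_smul_eq_coe_smul (K := ℂ), inner_smul_left, conj_ofReal, map_sub, re_ofReal_mul,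
      inner_self_eq_norm_sq, hx, hDD]
    nlinarith

lemma bddAbove_range_re_inner_sub_sq (C D : E →L[ℂ] E) :
    BddAbove (Set.range fun x : {x : E // ‖x‖ = 1} =>
      re ⟪C (x : E), x⟫_ℂ - re ⟪D (x : E), x⟫_ℂ ^ 2) := by
  refine ⟨‖C‖, ?_⟩
  rintro _ ⟨⟨x, hx⟩, rfl⟩
  have := (re_inner_le_norm (𝕜 := ℂ) (C x) x).trans
    (mul_le_mul_of_nonneg_right (C.le_opNorm x) (norm_nonneg x))
  simp only [hx, mul_one] at this
  nlinarith [sq_nonneg (re ⟪D x, x⟫_ℂ)]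

end Complex

end ContinuousLinearMap

/-- Reverse of the parallel-sum inequality `Φ(A : B) ≤ Φ(A) : Φ(B)`. -/
theorem reverse_parallel_sum {H K : Type*}
    [NormedAddCommGroup H] [InnerProductSpace ℂ H] [CompleteSpace H]
    [NormedAddCommGroup K] [InnerProductSpace ℂ K] [CompleteSpace K]
    (A B : H →L[ℂ] H) (hA : A.IsPositive) (hAinv : IsUnit A)
    (hB : B.IsPositive) (hBinv : IsUnit B)
    (Φ : (H →L[ℂ] H) →ₗ[ℂ] (K →L[ℂ] K))
    (hΦpos : ∀ T : H →L[ℂ] H, T.IsPositive → (Φ T).IsPositive)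
    (hΦ1 : Φ 1 = 1)
    (δ : ℝ)
    (hδ : δ = ⨆ x : {x : K // ‖x‖ = 1},
      (RCLike.re ⟪(cfc (fun t : ℝ => t ^ (-(1/2) : ℝ)) (Φ (A + B))
          * Φ (A * Ring.inverse (A + B) * A)
          * cfc (fun t : ℝ => t ^ (-(1/2) : ℝ)) (Φ (A + B))) (x : K), (x : K)⟫_ℂ
        - (RCLike.re ⟪(cfc (fun t : ℝ => t ^ (-(1/2) : ℝ)) (Φ (A + B)) * Φ A
            * cfc (fun t : ℝ => t ^ (-(1/2) : ℝ)) (Φ (A + B))) (x : K), (x : K)⟫_ℂ) ^ 2)) :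
    Ring.inverse (Ring.inverse (Φ A) + Ring.inverse (Φ B)) ≤
      Φ (Ring.inverse (Ring.inverse A + Ring.inverse B)) + (2 * δ) • Φ (A + B) := by
  have hΦ (T : H →L[ℂ] H) (hT : 0 ≤ T) : 0 ≤ Φ T :=
    (Φ T).nonneg_iff_isPositive.2 (hΦpos T (T.nonneg_iff_isPositive.1 hT))
  have ha : IsStrictlyPositive A := ⟨A.nonneg_iff_isPositive.2 hA, hAinv⟩
  have hb : IsStrictlyPositive B := ⟨B.nonneg_iff_isPositive.2 hB, hBinv⟩
  have ht : IsStrictlyPositive (A + B) := ha.add_nonneg hb.nonneg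
  have hs : IsStrictlyPositive (Φ (A + B)) := ht.map_of_map_nonneg Φ hΦ hΦ1
  rw [← rpow_eq_cfc_real hs.nonneg] at hδ
  have hquad := conjugate_map_mul_inverse_mul_sub_smul_add_smul_nonneg Φ hΦ ha.isSelfAdjoint ht hs
  have hδ0 : 0 ≤ δ := hδ ▸ Real.iSup_nonneg fun x =>
    sub_nonneg.2 (ContinuousLinearMap.sq_re_inner_le_re_inner hquad x.2)
  have hreduced : Φ (A * (A + B)⁻¹ʳ * A) - Φ A * (Φ (A + B))⁻¹ʳ * Φ A ≤ (2 * δ) • Φ (A + B) := by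
    refine le_smul_of_conjugate_rpow_neg_one_half_le hs ?_
    rw [mul_sub, sub_mul, conjugate_rpow_neg_one_half_mul_inverse_mul hs]
    have hm : 0 ≤ Φ (A + B) ^ (-(1 / 2) : ℝ) := rpow_nonneg
    have hC := conjugate_nonneg_of_nonneg (hΦ _ (conjugate_nonneg_of_nonneg ht.ringInverse.nonneg
      ha.nonneg)) hm
    have hD := conjugate_nonneg_of_nonneg (hΦ _ ha.nonneg) hm
    refine (ContinuousLinearMap.sub_mul_self_le_smul_one hC.isSelfAdjoint hD.isSelfAdjoint
      fun x hx => hδ ▸ le_ciSup (ContinuousLinearMap.bddAbove_range_re_inner_sub_sq _ _)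
        ⟨x, hx⟩).trans ?_
    gcongr
    linarith
  have hΦAB : Φ A + Φ B = Φ (A + B) := (map_add Φ A B).symm
  rw [Ring.inverse_inverse_add_inverse ha.isUnit hb.isUnit ht.isUnit,
    Ring.inverse_inverse_add_inverse (ha.map_of_map_nonneg Φ hΦ hΦ1).isUnit
      (hb.map_of_map_nonneg Φ hΦ hΦ1).isUnit (hΦAB ▸ hs.isUnit), hΦAB, map_sub]
  refine sub_nonneg.1 ?_
  convert sub_nonneg.2 hreduced using 1
  abel
end

section
/- Let A₁,…,Aₙ be self-adjoint operators with spectra in an interval J, Φ₁,…,Φₙ : B(H) → B(K) positive linear maps with ∑ᵢ Φᵢ(1_H) = 1_K, and f : J → ℝ convex differentiable. Then for every unit vector x ∈ K: ⟨∑ᵢ Φᵢ(f(Aᵢ)) x, x⟩ ≤ f(⟨∑ᵢ Φᵢ(Aᵢ) x, x⟩) + ⟨∑ᵢ Φᵢ(f'(Aᵢ)Aᵢ) x, x⟩ − ⟨∑ᵢ Φᵢ(Aᵢ) x, x⟩·⟨∑ᵢ Φᵢ(f'(Aᵢ)) x, x⟩. -/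
open scoped InnerProductSpace

/-! Convexity gives the tangent-line bound `f t ≤ f μ + f' t * (t - μ)` for all `t, μ ∈ J`.
Take `μ := ⟪∑ Φᵢ(Aᵢ) x, x⟫`, which lies in `J` because it is squeezed between the extreme points
of the spectra of the `Aᵢ`. The functional calculus lifts the bound to the operator inequality
`f(Aᵢ) ≤ f(μ) + f'(Aᵢ) Aᵢ - μ f'(Aᵢ)`, and the positive functionals `T ↦ ⟪Φᵢ(T) x, x⟫`, whose
values at `1` sum to `1`, turn it into the claim. -/

theorem ConvexOn.add_mul_sub_le_of_hasDerivAt_s15 {S : Set ℝ} {f : ℝ → ℝ} {x y f'x : ℝ}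
    (hf : ConvexOn ℝ S f) (hx : x ∈ S) (hy : y ∈ S) (hd : HasDerivAt f f'x x) :
    f x + f'x * (y - x) ≤ f y := by
  rcases lt_trichotomy x y with hxy | rfl | hxy
  · have := hf.le_slope_of_hasDerivAt hx hy hxy hd
    rw [slope_def_field, le_div_iff₀ (sub_pos.2 hxy)] at this
    linarith
  · simp
  · have := hf.slope_le_of_hasDerivAt hy hx hxy hd
    rw [slope_def_field, div_le_iff₀ (sub_pos.2 hxy)] at this
    linarith

theorem sum_apply_algebraMap_of_sum_apply_one {A ι : Type*} [Ring A] [PartialOrder A]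
    [Algebra ℝ A] [Fintype ι] {φ : ι → A →ₚ[ℝ] ℝ} (hφ : ∑ i, φ i 1 = 1) (r : ℝ) :
    ∑ i, φ i (algebraMap ℝ A r) = r := by
  simp [Algebra.algebraMap_eq_smul_one, ← Finset.mul_sum, hφ]

section CStarAlgebra

variable {A : Type*} [CStarAlgebra A] [PartialOrder A] [StarOrderedRing A]

theorem exists_algebraMap_le_and_le_algebraMap_of_spectrum_subset [Nontrivial A] {ι : Type*}
    [Finite ι] [Nonempty ι] {J : Set ℝ} {a : ι → A} (ha : ∀ i, IsSelfAdjoint (a i))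
    (hspec : ∀ i, spectrum ℝ (a i) ⊆ J) :
    ∃ c ∈ J, ∃ d ∈ J, ∀ i, algebraMap ℝ A c ≤ a i ∧ a i ≤ algebraMap ℝ A d := by
  have hcpt : IsCompact (⋃ i, spectrum ℝ (a i)) := isCompact_iUnion fun i => spectrum.isCompact _
  have hne : (⋃ i, spectrum ℝ (a i)).Nonempty :=
    Set.nonempty_iUnion.2
      ⟨Classical.arbitrary ι, ContinuousFunctionalCalculus.spectrum_nonempty _ (ha _)⟩
  obtain ⟨c, hcS, hc⟩ := hcpt.exists_isLeast hne
  obtain ⟨d, hdS, hd⟩ := hcpt.exists_isGreatest hne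
  refine ⟨c, Set.iUnion_subset hspec hcS, d, Set.iUnion_subset hspec hdS, fun i => ⟨?_, ?_⟩⟩
  · exact (algebraMap_le_iff_le_spectrum (ha i)).2 fun t ht => hc (Set.mem_iUnion_of_mem i ht)
  · exact (le_algebraMap_iff_spectrum_le (ha i)).2 fun t ht => hd (Set.mem_iUnion_of_mem i ht)

theorem ConvexOn.cfc_le_of_hasDerivAt {J : Set ℝ} {f f' : ℝ → ℝ} (hf : ConvexOn ℝ J f)
    (hf' : ∀ t ∈ J, HasDerivAt f (f' t) t) (hf'c : ContinuousOn f' J) {a : A}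
    (ha : IsSelfAdjoint a) (hspec : spectrum ℝ a ⊆ J) {μ : ℝ} (hμ : μ ∈ J) :
    cfc f a ≤ algebraMap ℝ A (f μ) + (cfc f' a * a - μ • cfc f' a) := by
  have hfc : ContinuousOn f (spectrum ℝ a) := fun t ht =>
    (hf' t (hspec ht)).continuousAt.continuousWithinAt
  have hf'σ : ContinuousOn f' (spectrum ℝ a) := hf'c.mono hspec
  have htangent : cfc (fun t => f μ + (f' t * t - μ * f' t)) a =
      algebraMap ℝ A (f μ) + (cfc f' a * a - μ • cfc f' a) := by
    rw [cfc_add .., cfc_const .., cfc_sub .., cfc_mul (fun t => f' t) (fun t => t) .., cfc_id' ..,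
      cfc_const_mul ..]
  rw [← htangent]
  refine cfc_mono fun t ht => ?_
  have := hf.add_mul_sub_le_of_hasDerivAt_s15 (hspec ht) hμ (hf' t (hspec ht))
  linarith

variable {ι : Type*} [Fintype ι]

theorem sum_apply_mem_of_spectrum_subset {φ : ι → A →ₚ[ℝ] ℝ} (hφ : ∑ i, φ i 1 = 1)
    {J : Set ℝ} [J.OrdConnected] {a : ι → A} (ha : ∀ i, IsSelfAdjoint (a i))
    (hspec : ∀ i, spectrum ℝ (a i) ⊆ J) :
    ∑ i, φ i (a i) ∈ J := by
  have : Nontrivial A := ⟨⟨1, 0, fun h => by simp [h] at hφ⟩⟩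
  have : Nonempty ι := (isEmpty_or_nonempty ι).resolve_left fun _ => by simp at hφ
  obtain ⟨c, hc, d, hd, hcd⟩ := exists_algebraMap_le_and_le_algebraMap_of_spectrum_subset ha hspec
  refine Set.OrdConnected.out ‹_› hc hd ⟨?_, ?_⟩
  · calc c = ∑ i, φ i (algebraMap ℝ A c) := (sum_apply_algebraMap_of_sum_apply_one hφ c).symm
      _ ≤ ∑ i, φ i (a i) := Finset.sum_le_sum fun i _ => (φ i).monotone (hcd i).1
  · calc ∑ i, φ i (a i) ≤ ∑ i, φ i (algebraMap ℝ A d) :=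
          Finset.sum_le_sum fun i _ => (φ i).monotone (hcd i).2
      _ = d := sum_apply_algebraMap_of_sum_apply_one hφ d

theorem ConvexOn.sum_apply_cfc_le_of_hasDerivAt {φ : ι → A →ₚ[ℝ] ℝ} (hφ : ∑ i, φ i 1 = 1)
    {J : Set ℝ} {f f' : ℝ → ℝ} (hf : ConvexOn ℝ J f) (hf' : ∀ t ∈ J, HasDerivAt f (f' t) t)
    (hf'c : ContinuousOn f' J) {a : ι → A} (ha : ∀ i, IsSelfAdjoint (a i))
    (hspec : ∀ i, spectrum ℝ (a i) ⊆ J) :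
    ∑ i, φ i (cfc f (a i)) ≤ f (∑ i, φ i (a i)) + ∑ i, φ i (cfc f' (a i) * a i)
      - (∑ i, φ i (a i)) * ∑ i, φ i (cfc f' (a i)) := by
  set μ := ∑ i, φ i (a i)
  have : J.OrdConnected := hf.1.ordConnected
  have hμ : μ ∈ J := sum_apply_mem_of_spectrum_subset hφ ha hspec
  calc ∑ i, φ i (cfc f (a i))
      ≤ ∑ i, φ i (algebraMap ℝ A (f μ) + (cfc f' (a i) * a i - μ • cfc f' (a i))) :=
        Finset.sum_le_sum fun i _ =>
          (φ i).monotone (hf.cfc_le_of_hasDerivAt hf' hf'c (ha i) (hspec i) hμ)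
    _ = _ := by
      simp only [map_add, map_sub, map_smul, Finset.sum_add_distrib, Finset.sum_sub_distrib,
        sum_apply_algebraMap_of_sum_apply_one hφ, smul_eq_mul, ← Finset.mul_sum]
      ring

end CStarAlgebra

section InnerProductSpace

variable {E : Type*} [NormedAddCommGroup E] [InnerProductSpace ℂ E]

noncomputable def vectorFunctional (x : E) : (E →L[ℂ] E) →ₚ[ℝ] ℝ where
  toFun T := RCLike.re ⟪T x, x⟫_ℂ
  map_add' S T := by simp
  map_smul' r T := by simp
  monotone' S T hST := by
    simpa [inner_sub_left] using ((ContinuousLinearMap.le_def S T).1 hST).re_inner_nonneg_left x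

theorem vectorFunctional_apply (x : E) (T : E →L[ℂ] E) :
    vectorFunctional x T = RCLike.re ⟪T x, x⟫_ℂ := rfl

theorem vectorFunctional_one {x : E} (hx : ‖x‖ = 1) : vectorFunctional x 1 = 1 := by
  simp [vectorFunctional_apply, hx]

end InnerProductSpace

/-- Pointwise reverse of the vector Jensen inequality. -/
theorem pointwise_reverse_vector_jensen {H K : Type*}
    [NormedAddCommGroup H] [InnerProductSpace ℂ H] [CompleteSpace H]
    [NormedAddCommGroup K] [InnerProductSpace ℂ K] [CompleteSpace K]
    (f f' : ℝ → ℝ) (J : Set ℝ) (hf : ConvexOn ℝ J f)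
    (hf' : ∀ t ∈ J, HasDerivAt f (f' t) t) (hf'c : ContinuousOn f' J)
    (n : ℕ) (A : Fin n → H →L[ℂ] H)
    (Φ : Fin n → (H →L[ℂ] H) →ₗ[ℂ] (K →L[ℂ] K))
    (hA : ∀ i, IsSelfAdjoint (A i)) (hspec : ∀ i, spectrum ℝ (A i) ⊆ J)
    (hΦpos : ∀ i, ∀ T : H →L[ℂ] H, T.IsPositive → (Φ i T).IsPositive)
    (hunital : ∑ i, Φ i 1 = 1)
    (x : K) (hx : ‖x‖ = 1) :
    RCLike.re ⟪(∑ i, Φ i (cfc f (A i))) x, x⟫_ℂ ≤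
      f (RCLike.re ⟪(∑ i, Φ i (A i)) x, x⟫_ℂ)
        + RCLike.re ⟪(∑ i, Φ i (cfc f' (A i) * A i)) x, x⟫_ℂ
        - RCLike.re ⟪(∑ i, Φ i (A i)) x, x⟫_ℂ
          * RCLike.re ⟪(∑ i, Φ i (cfc f' (A i))) x, x⟫_ℂ := by
  let Ψ i : (H →L[ℂ] H) →ₚ[ℝ] (K →L[ℂ] K) := PositiveLinearMap.mk₀ ((Φ i).restrictScalars ℝ)
    fun T hT => (ContinuousLinearMap.nonneg_iff_isPositive _).2
      (hΦpos i T ((ContinuousLinearMap.nonneg_iff_isPositive T).1 hT))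
  let φ i := (vectorFunctional x).comp (Ψ i)
  have hφ : ∑ i, φ i 1 = 1 := by
    rw [← vectorFunctional_one hx, ← hunital, map_sum]
    rfl
  have key := hf.sum_apply_cfc_le_of_hasDerivAt hφ hf' hf'c hA hspec
  simp only [φ, PositiveLinearMap.comp_apply, ← map_sum] at key
  exact key
end
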